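/- Let f : ℝ → ℝ be the inverse of h. Then the map φ : ℝ → ℝ given by φ(v) = f(v)·√(1 + f(v)²) (i.e. φ = f/f') is differentiable at every v ∈ ℝ with derivative φ'(v) = 1 + f(v)²/(1 + f(v)²), and this derivative satisfies 1 ≤ φ'(v) < 2 for all v. -/

import Mathlib

/-!
Since `log (u + √(1+u²)) = arsinh u`, the derivative of `h` is `√(1+u²) > 0`, so `h` is a strictly
increasing bijection and its inverse `f` is differentiable with `f' = 1/√(1+f²)`. Writing
`φ = g ∘ f` with `g u = u √(1+u²)`, the chain rule gives
`φ' = g'(f) · f' = (1 + f²/(1+f²)) √(1+f²) · 1/√(1+f²)`.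
-/

noncomputable def h (u : ℝ) : ℝ :=
  (1 / 2) * u * Real.sqrt (1 + u ^ 2) + (1 / 2) * Real.log (u + Real.sqrt (1 + u ^ 2))

open Real

lemma sqrt_one_add_sq_pos (u : ℝ) : 0 < √(1 + u ^ 2) := by positivity

lemma hasDerivAt_sqrt_one_add_sq (u : ℝ) :
    HasDerivAt (fun u : ℝ => √(1 + u ^ 2)) (u / √(1 + u ^ 2)) u := by
  have hsq : HasDerivAt (fun u : ℝ => 1 + u ^ 2) (2 * u) u := by
    simpa using (hasDerivAt_pow 2 u).const_add 1
  convert (hsq.sqrt (by positivity)) using 1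
  exact (mul_div_mul_left _ _ two_ne_zero).symm

lemma hasDerivAt_mul_sqrt_one_add_sq (u : ℝ) :
    HasDerivAt (fun u : ℝ => u * √(1 + u ^ 2)) ((1 + u ^ 2 / (1 + u ^ 2)) * √(1 + u ^ 2)) u := by
  refine ((hasDerivAt_id' u).mul (hasDerivAt_sqrt_one_add_sq u)).congr_deriv ?_
  have hs := sqrt_one_add_sq_pos u
  have hss : √(1 + u ^ 2) ^ 2 = 1 + u ^ 2 := sq_sqrt (by positivity)
  field_simp
  rw [hss]

lemma h_eq_mul_sqrt_add_arsinh :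
    h = fun u => 1 / 2 * (u * √(1 + u ^ 2)) + 1 / 2 * arsinh u := by
  funext u
  simp only [h, arsinh]
  ring

lemma hasDerivAt_h (u : ℝ) : HasDerivAt h (√(1 + u ^ 2)) u := by
  rw [h_eq_mul_sqrt_add_arsinh]
  refine (((hasDerivAt_mul_sqrt_one_add_sq u).const_mul (1 / 2)).add
    ((hasDerivAt_arsinh u).const_mul (1 / 2))).congr_deriv ?_
  have hs := sqrt_one_add_sq_pos u
  have hss : √(1 + u ^ 2) ^ 2 = 1 + u ^ 2 := sq_sqrt (by positivity)
  field_simp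
  rw [hss]
  ring

lemma h_strictMono : StrictMono h :=
  strictMono_of_hasDerivAt_pos hasDerivAt_h sqrt_one_add_sq_pos

theorem StrictMono.hasDerivAt_of_rightInverse {g f : ℝ → ℝ} {g' v : ℝ} (hg : StrictMono g)
    (hfg : Function.RightInverse f g) (hd : HasDerivAt g g' (f v)) (hg' : g' ≠ 0) :
    HasDerivAt f g'⁻¹ v := by
  have hmono : Monotone f := fun a b hab => hg.le_iff_le.mp (by rwa [hfg a, hfg b])
  have hsurj : Function.Surjective f := fun x => ⟨g x, hg.injective (hfg (g x))⟩
  exact hd.of_local_left_inverse (hmono.continuous_of_surjective hsurj).continuousAt hg'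
    (Filter.Eventually.of_forall hfg)

lemma one_le_one_add_sq_div (c : ℝ) : 1 ≤ 1 + c ^ 2 / (1 + c ^ 2) :=
  le_add_of_nonneg_right (by positivity)

lemma one_add_sq_div_lt_two (c : ℝ) : 1 + c ^ 2 / (1 + c ^ 2) < 2 := by
  have : c ^ 2 / (1 + c ^ 2) < 1 := (div_lt_one (by positivity)).mpr (by linarith)
  linarith

theorem stmt_13_general (f : ℝ → ℝ)
    (hf₂ : Function.RightInverse f h) :
    ∀ v : ℝ,
      HasDerivAt (fun v : ℝ => f v * Real.sqrt (1 + f v ^ 2))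
        (1 + f v ^ 2 / (1 + f v ^ 2)) v ∧
      1 ≤ 1 + f v ^ 2 / (1 + f v ^ 2) ∧ 1 + f v ^ 2 / (1 + f v ^ 2) < 2 := by
  intro v
  have hf : HasDerivAt f (√(1 + f v ^ 2))⁻¹ v :=
    h_strictMono.hasDerivAt_of_rightInverse hf₂ (hasDerivAt_h (f v))
      (sqrt_one_add_sq_pos (f v)).ne'
  have hφ := (hasDerivAt_mul_sqrt_one_add_sq (f v)).comp v hf
  rw [mul_inv_cancel_right₀ (sqrt_one_add_sq_pos (f v)).ne'] at hφ
  exact ⟨hφ, one_le_one_add_sq_div _, one_add_sq_div_lt_two _⟩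

theorem stmt_13 (f : ℝ → ℝ) (hf₁ : Function.LeftInverse f h)
    (hf₂ : Function.RightInverse f h) :
    ∀ v : ℝ,
      HasDerivAt (fun v : ℝ => f v * Real.sqrt (1 + f v ^ 2))
        (1 + f v ^ 2 / (1 + f v ^ 2)) v ∧
      1 ≤ 1 + f v ^ 2 / (1 + f v ^ 2) ∧ 1 + f v ^ 2 / (1 + f v ^ 2) < 2 :=
  stmt_13_general f hf₂
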